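/- arXiv:2009.03110 — 3 statements merged into one kernel-verified Lean document; each statement's English description precedes it below -/
import Mathlib

section
/- Let β > 0, E_0 > 0, and q ∈ (p^β, 1/2] where p^β = e^{-βE_0}/(1+e^{-βE_0}). Define E(q) = -(1/β) ln(q/(1-q)) and ε_III(q) = -E(q) + E_0 + (1/β)·ln((1+e^{-βE_0})/(1+e^{-βE(q)})). Then ε_III(q) > 0, and ε_III(p^β) = 0. -/
/-!
Write `p(E) = e^{-βE}/(1+e^{-βE})` for the excited population of the Gibbs state at gap `E`. Since
`p(E) = e^{-βE} (1 - p(E))`, the quantity `E + (1/β) ln(1 + e^{-βE})` equals `-(1/β) ln p(E)`, so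
`ε_III(q) = (1/β) (ln p(E(q)) - ln p(E₀)) = (1/β) ln(q / p^β)`, because `E(q)` is exactly the gap whose
Gibbs excited population is `q`. This is positive for `q > p^β` and vanishes at `q = p^β`.
-/

open Real

noncomputable section

def excitedPopulation (β E : ℝ) : ℝ := exp (-β * E) / (1 + exp (-β * E))

def workLoss (β E₀ E : ℝ) : ℝ :=
  -E + E₀ + (1 / β) * log ((1 + exp (-β * E₀)) / (1 + exp (-β * E)))

end

lemma excitedPopulation_pos (β E : ℝ) : 0 < excitedPopulation β E := by
  unfold excitedPopulation; positivity

lemma excitedPopulation_lt_one (β E : ℝ) : excitedPopulation β E < 1 := by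
  rw [excitedPopulation, div_lt_one (by positivity)]
  linarith

lemma log_excitedPopulation (β E : ℝ) :
    log (excitedPopulation β E) = -β * E - log (1 + exp (-β * E)) := by
  rw [excitedPopulation, log_div (exp_pos _).ne' (by positivity), log_exp]

lemma add_inv_mul_log_one_add_exp {β : ℝ} (hβ : β ≠ 0) (E : ℝ) :
    E + (1 / β) * log (1 + exp (-β * E)) = -(1 / β) * log (excitedPopulation β E) := by
  rw [log_excitedPopulation]
  field_simp
  ring

lemma workLoss_eq {β : ℝ} (hβ : β ≠ 0) (E₀ E : ℝ) :
    workLoss β E₀ E = (1 / β) * (log (excitedPopulation β E) - log (excitedPopulation β E₀)) := by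
  have hE₀ := add_inv_mul_log_one_add_exp hβ E₀
  have hE := add_inv_mul_log_one_add_exp hβ E
  rw [workLoss, log_div (by positivity) (by positivity)]
  linear_combination hE₀ - hE

lemma excitedPopulation_neg_inv_mul_log_odds {β q : ℝ} (hβ : β ≠ 0) (hq₀ : 0 < q) (hq₁ : q < 1) :
    excitedPopulation β (-(1 / β) * log (q / (1 - q))) = q := by
  have hodds : exp (-β * (-(1 / β) * log (q / (1 - q)))) = q / (1 - q) := by
    rw [show -β * (-(1 / β) * log (q / (1 - q))) = log (q / (1 - q)) by field_simp,
      exp_log (div_pos hq₀ (sub_pos.2 hq₁))]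
  rw [excitedPopulation, hodds]
  field_simp [(sub_pos.2 hq₁).ne']
  ring

theorem eps_III_pos_general (β E₀ : ℝ) (hβ : 0 < β)
    (pβ : ℝ) (hpβ : pβ = exp (-β * E₀) / (1 + exp (-β * E₀)))
    (q : ℝ) (hq1 : pβ < q) (hq2 : q ≤ 1 / 2)
    (Eq : ℝ) (hEq : Eq = -(1 / β) * log (q / (1 - q)))
    (ε : ℝ)
    (hε : ε = -Eq + E₀ + (1 / β) * log ((1 + exp (-β * E₀)) / (1 + exp (-β * Eq)))) :
    0 < ε ∧
    -(-(1 / β) * log (pβ / (1 - pβ))) + E₀ +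
        (1 / β) * log ((1 + exp (-β * E₀)) /
          (1 + exp (-β * (-(1 / β) * log (pβ / (1 - pβ)))))) = 0 := by
  change pβ = excitedPopulation β E₀ at hpβ
  change ε = workLoss β E₀ Eq at hε
  show 0 < ε ∧ workLoss β E₀ (-(1 / β) * log (pβ / (1 - pβ))) = 0
  have hpβ₀ : 0 < pβ := hpβ ▸ excitedPopulation_pos β E₀
  have hpβ₁ : pβ < 1 := hpβ ▸ excitedPopulation_lt_one β E₀
  rw [workLoss_eq hβ.ne', excitedPopulation_neg_inv_mul_log_odds hβ.ne' hpβ₀ hpβ₁, ← hpβ]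
  refine ⟨?_, by ring⟩
  rw [hε, hEq, workLoss_eq hβ.ne',
    excitedPopulation_neg_inv_mul_log_odds hβ.ne' (hpβ₀.trans hq1) (by linarith), ← hpβ]
  exact mul_pos (by positivity) (sub_pos.2 (log_lt_log hpβ₀ hq1))

theorem eps_III_pos (β E₀ : ℝ) (hβ : 0 < β) (hE₀ : 0 < E₀)
    (pβ : ℝ) (hpβ : pβ = exp (-β * E₀) / (1 + exp (-β * E₀)))
    (q : ℝ) (hq1 : pβ < q) (hq2 : q ≤ 1 / 2)
    (Eq : ℝ) (hEq : Eq = -(1 / β) * log (q / (1 - q)))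
    (ε : ℝ)
    (hε : ε = -Eq + E₀ + (1 / β) * log ((1 + exp (-β * E₀)) / (1 + exp (-β * Eq)))) :
    0 < ε ∧
    -(-(1 / β) * log (pβ / (1 - pβ))) + E₀ +
        (1 / β) * log ((1 + exp (-β * E₀)) /
          (1 + exp (-β * (-(1 / β) * log (pβ / (1 - pβ)))))) = 0 :=
  eps_III_pos_general β E₀ hβ pβ hpβ q hq1 hq2 Eq hEq ε hε
end

section
/- Let W be a random variable with mean E[W] = -ΔF - A for reals ΔF and 0 ≤ A < 4/β (β > 0), and variance Var(W) ≤ 2A/β. Then for any ε > 0, P(W ≤ -ΔF + ε) ≥ ε/(4/β + ε). -/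
/-!
Cantelli's one-sided Chebyshev inequality with `c = A + ε` bounds `P(W ≤ 𝔼W + c)` from below by
`c² / (c² + Var W)`, and `Var W ≤ 2A/β` turns this into `c² / (c² + 2A/β)`, which dominates
`ε / (4/β + ε)` because `A ε ≤ 2 (A + ε)²`.
-/

open MeasureTheory ProbabilityTheory

namespace ProbabilityTheory

variable {Ω : Type*} [MeasurableSpace Ω] {μ : Measure Ω} [IsProbabilityMeasure μ] {X : Ω → ℝ}

lemma integral_add_const_sq (hX : MemLp X 2 μ) (a : ℝ) :
    ∫ ω, (X ω + a) ^ 2 ∂μ = Var[X; μ] + (μ[X] + a) ^ 2 := by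
  have hmean : μ[fun ω ↦ X ω + a] = μ[X] + a := by
    rw [integral_add (hX.integrable one_le_two) (integrable_const a)]
    simp
  have h := variance_eq_sub (X := fun ω ↦ X ω + a) (hX.add (memLp_const a))
  rw [variance_add_const hX.aestronglyMeasurable, hmean] at h
  simp only [Pi.pow_apply] at h
  linarith

/-- Markov's inequality for `(X - 𝔼X + t)²`; Cantelli's inequality is the choice `t = Var[X] / c`. -/
lemma measureReal_ge_integral_add_mul_sq_le (hX : MemLp X 2 μ) {c t : ℝ} (hc : 0 ≤ c)
    (ht : 0 ≤ t) :
    μ.real {ω | μ[X] + c ≤ X ω} * (c + t) ^ 2 ≤ Var[X; μ] + t ^ 2 := by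
  have hsub : {ω | μ[X] + c ≤ X ω} ⊆ {ω | (c + t) ^ 2 ≤ (X ω + (t - μ[X])) ^ 2} :=
    fun ω (hω : μ[X] + c ≤ X ω) ↦ by
      have : c + t ≤ X ω + (t - μ[X]) := by linarith
      exact pow_le_pow_left₀ (by positivity) this 2
  calc μ.real {ω | μ[X] + c ≤ X ω} * (c + t) ^ 2
      ≤ (c + t) ^ 2 * μ.real {ω | (c + t) ^ 2 ≤ (X ω + (t - μ[X])) ^ 2} := by
        rw [mul_comm]; exact mul_le_mul_of_nonneg_left (measureReal_mono hsub) (sq_nonneg _)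
    _ ≤ ∫ ω, (X ω + (t - μ[X])) ^ 2 ∂μ :=
        mul_meas_ge_le_integral_of_nonneg (ae_of_all _ fun _ ↦ sq_nonneg _)
          (hX.add (memLp_const _)).integrable_sq _
    _ = Var[X; μ] + t ^ 2 := by rw [integral_add_const_sq hX, add_sub_cancel]

theorem measureReal_ge_integral_add_le_variance_div (hX : MemLp X 2 μ) {c : ℝ} (hc : 0 < c) :
    μ.real {ω | μ[X] + c ≤ X ω} ≤ Var[X; μ] / (c ^ 2 + Var[X; μ]) := by
  have hV := variance_nonneg X μ
  have h := measureReal_ge_integral_add_mul_sq_le hX hc.le (div_nonneg hV hc.le)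
  have hsum : c + Var[X; μ] / c = (c ^ 2 + Var[X; μ]) / c := by field_simp
  have hrhs : Var[X; μ] + (Var[X; μ] / c) ^ 2 = Var[X; μ] * (c ^ 2 + Var[X; μ]) / c ^ 2 := by
    field_simp
  rw [hsum, hrhs, div_pow, ← mul_div_assoc, div_le_div_iff_of_pos_right (by positivity), pow_two,
    ← mul_assoc] at h
  rw [le_div_iff₀ (by positivity)]
  exact le_of_mul_le_mul_right h (by positivity)

theorem sq_div_le_measureReal_le_integral_add (hX : MemLp X 2 μ) {c : ℝ} (hc : 0 < c) :
    c ^ 2 / (c ^ 2 + Var[X; μ]) ≤ μ.real {ω | X ω ≤ μ[X] + c} := by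
  have hnull : NullMeasurableSet {ω | μ[X] + c ≤ X ω} μ :=
    nullMeasurableSet_le aemeasurable_const hX.aestronglyMeasurable.aemeasurable
  have hpos : 0 < c ^ 2 + Var[X; μ] := by have := variance_nonneg X μ; positivity
  calc c ^ 2 / (c ^ 2 + Var[X; μ]) = 1 - Var[X; μ] / (c ^ 2 + Var[X; μ]) := by field_simp; ring
    _ ≤ 1 - μ.real {ω | μ[X] + c ≤ X ω} := by
        gcongr; exact measureReal_ge_integral_add_le_variance_div hX hc
    _ = μ.real {ω | μ[X] + c ≤ X ω}ᶜ := (probReal_compl_eq_one_sub₀ hnull).symm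
    _ ≤ μ.real {ω | X ω ≤ μ[X] + c} :=
        measureReal_mono fun ω (hω : ¬μ[X] + c ≤ X ω) ↦ (not_le.mp hω).le

end ProbabilityTheory

/-- Cross-multiplied, this is `A * ε ≤ 2 * (A + ε) ^ 2`. -/
lemma div_add_le_sq_div_sq_add {β A ε : ℝ} (hβ : 0 < β) (hA : 0 ≤ A) (hε : 0 < ε) :
    ε / (4 / β + ε) ≤ (A + ε) ^ 2 / ((A + ε) ^ 2 + 2 * A / β) := by
  rw [div_le_div_iff₀ (by positivity) (by positivity)]
  have hkey : ε * (2 * A / β) ≤ (A + ε) ^ 2 * (4 / β) := by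
    rw [mul_div_assoc', mul_div_assoc']
    exact div_le_div_of_nonneg_right (by nlinarith [mul_nonneg hA hε.le]) hβ.le
  linarith

theorem chebyshev_small_area_general
    {Ω : Type*} [MeasurableSpace Ω] (μ : Measure Ω) [IsProbabilityMeasure μ]
    (W : Ω → ℝ) (hW : MemLp W 2 μ)
    (β ΔF A : ℝ) (hβ : 0 < β) (hA0 : 0 ≤ A)
    (hmean : ∫ ω, W ω ∂μ = -ΔF - A)
    (hvar : variance W μ ≤ 2 * A / β)
    (ε : ℝ) (hε : 0 < ε) :
    ε / (4 / β + ε) ≤ (μ {ω | W ω ≤ -ΔF + ε}).toReal := by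
  have hc : 0 < A + ε := by positivity
  have hthreshold : -ΔF + ε = μ[W] + (A + ε) := by rw [hmean]; ring
  rw [hthreshold, ← measureReal_def]
  calc ε / (4 / β + ε) ≤ (A + ε) ^ 2 / ((A + ε) ^ 2 + 2 * A / β) :=
        div_add_le_sq_div_sq_add hβ hA0 hε
    _ ≤ (A + ε) ^ 2 / ((A + ε) ^ 2 + Var[W; μ]) := by
        have := variance_nonneg W μ
        gcongr
    _ ≤ μ.real {ω | W ω ≤ μ[W] + (A + ε)} := sq_div_le_measureReal_le_integral_add hW hc

theorem chebyshev_small_area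
    {Ω : Type*} [MeasurableSpace Ω] (μ : Measure Ω) [IsProbabilityMeasure μ]
    (W : Ω → ℝ) (hW : MemLp W 2 μ)
    (β ΔF A : ℝ) (hβ : 0 < β) (hA0 : 0 ≤ A) (hA : A < 4 / β)
    (hmean : ∫ ω, W ω ∂μ = -ΔF - A)
    (hvar : variance W μ ≤ 2 * A / β)
    (ε : ℝ) (hε : 0 < ε) :
    ε / (4 / β + ε) ≤ (μ {ω | W ω ≤ -ΔF + ε}).toReal :=
  chebyshev_small_area_general μ W hW β ΔF A hβ hA0 hmean hvar ε hε
end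

section
/- Combining the two cases: if W has mean E[W] = -ΔF - A with A ≥ 0, Var(W) ≤ 2A/β for β > 0, then for any ε > 0, P(W ≤ -ΔF + ε) ≥ min{2/3, ε/(4/β + ε)}. -/
open MeasureTheory ProbabilityTheory

/-!
Cantelli's inequality for `W` at distance `A + ε` above its mean `-ΔF - A` gives
`P(W ≤ -ΔF + ε) ≥ (A + ε)² / (Var W + (A + ε)²)`, and with `Var W ≤ 2A/β` this is at least
`ε / (4/β + ε)` because `2 (A + ε)² ≥ A ε`.
-/

section Cantelli

variable {Ω : Type*} [MeasurableSpace Ω] {μ : Measure Ω} [IsProbabilityMeasure μ] {X : Ω → ℝ}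

lemma integral_sub_integral_add_const_sq (hX : MemLp X 2 μ) (u : ℝ) :
    ∫ ω, (X ω - μ[X] + u) ^ 2 ∂μ = Var[X; μ] + u ^ 2 := by
  have hX₁ := hX.integrable one_le_two
  have hX₀ := hX.aestronglyMeasurable
  have hmean : ∫ ω, (X ω - μ[X] + u) ∂μ = u := by
    rw [integral_add (by fun_prop) (integrable_const u), integral_sub hX₁ (integrable_const _)]
    simp
  have hvar : Var[fun ω ↦ X ω - μ[X] + u; μ] = Var[X; μ] := by
    rw [variance_add_const (by fun_prop), variance_sub_const hX₀]
  have hY : MemLp (fun ω ↦ X ω - μ[X] + u) 2 μ := (hX.sub (memLp_const _)).add (memLp_const u)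
  have := variance_eq_sub hY
  simp only [hvar, Pi.pow_apply, hmean] at this
  linarith

/-- Markov's inequality applied to `(X - μ[X] + u)²`. -/
lemma measureReal_ge_add_le_variance_add_sq_div (hX : MemLp X 2 μ) {t u : ℝ} (ht : 0 < t)
    (hu : 0 ≤ u) :
    μ.real {ω | μ[X] + t ≤ X ω} ≤ (Var[X; μ] + u ^ 2) / (t + u) ^ 2 := by
  have hsub : {ω | μ[X] + t ≤ X ω} ⊆ {ω | (t + u) ^ 2 ≤ (X ω - μ[X] + u) ^ 2} := by
    intro ω hω
    simp only [Set.mem_ofPred_eq] at hω ⊢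
    gcongr
    linarith
  have hmarkov : (t + u) ^ 2 * μ.real {ω | (t + u) ^ 2 ≤ (X ω - μ[X] + u) ^ 2}
      ≤ Var[X; μ] + u ^ 2 := by
    rw [← integral_sub_integral_add_const_sq hX u]
    refine mul_meas_ge_le_integral_of_nonneg (.of_forall fun ω ↦ sq_nonneg _) ?_ _
    simpa using ((hX.sub (memLp_const _)).add (memLp_const u)).integrable_sq
  calc μ.real {ω | μ[X] + t ≤ X ω}
      ≤ μ.real {ω | (t + u) ^ 2 ≤ (X ω - μ[X] + u) ^ 2} := measureReal_mono hsub
    _ ≤ (Var[X; μ] + u ^ 2) / (t + u) ^ 2 := by rw [le_div_iff₀ (by positivity)]; linarith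

/-- **Cantelli's inequality**. -/
theorem measureReal_ge_add_le_variance_div (hX : MemLp X 2 μ) {t : ℝ} (ht : 0 < t) :
    μ.real {ω | μ[X] + t ≤ X ω} ≤ Var[X; μ] / (Var[X; μ] + t ^ 2) := by
  have hσ2 := variance_nonneg X μ
  -- the shift `u = Var[X] / t` minimises the bound
  have hopt : (Var[X; μ] + (Var[X; μ] / t) ^ 2) / (t + Var[X; μ] / t) ^ 2
      = Var[X; μ] / (Var[X; μ] + t ^ 2) := by
    have hden : 0 < Var[X; μ] + t ^ 2 := by positivity
    field_simp
    ring
  exact hopt ▸ measureReal_ge_add_le_variance_add_sq_div hX ht (by positivity)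

theorem sq_div_variance_add_sq_le_measureReal_le (hX : MemLp X 2 μ) {t : ℝ} (ht : 0 < t) :
    t ^ 2 / (Var[X; μ] + t ^ 2) ≤ μ.real {ω | X ω ≤ μ[X] + t} := by
  have hcover : 1 ≤ μ.real {ω | X ω ≤ μ[X] + t} + μ.real {ω | μ[X] + t ≤ X ω} := by
    calc 1 = μ.real Set.univ := probReal_univ.symm
      _ ≤ μ.real ({ω | X ω ≤ μ[X] + t} ∪ {ω | μ[X] + t ≤ X ω}) :=
          measureReal_mono fun ω _ ↦ by
            simpa only [Set.mem_union, Set.mem_ofPred_eq] using le_total _ _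
      _ ≤ _ := measureReal_union_le _ _
  have hσ2 := variance_nonneg X μ
  have hsplit : t ^ 2 / (Var[X; μ] + t ^ 2) = 1 - Var[X; μ] / (Var[X; μ] + t ^ 2) := by
    have hden : 0 < Var[X; μ] + t ^ 2 := by positivity
    field_simp
    ring
  linarith [measureReal_ge_add_le_variance_div hX ht]

end Cantelli

lemma nonneg_of_le_two_mul_div {β A σ2 : ℝ} (hβ : 0 < β) (hσ2 : 0 ≤ σ2)
    (hσ2A : σ2 ≤ 2 * A / β) : 0 ≤ A := by
  have := hσ2.trans hσ2A
  rw [le_div_iff₀ hβ] at this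
  linarith

lemma div_add_le_sq_div_add_sq {β A σ2 ε : ℝ} (hβ : 0 < β) (hA : 0 ≤ A) (hε : 0 < ε)
    (hσ2 : 0 ≤ σ2) (hσ2A : σ2 ≤ 2 * A / β) :
    ε / (4 / β + ε) ≤ (A + ε) ^ 2 / (σ2 + (A + ε) ^ 2) := by
  rw [div_le_div_iff₀ (by positivity) (by positivity)]
  have hεA : ε * A ≤ 2 * (A + ε) ^ 2 := by nlinarith [mul_nonneg hA hε.le]
  have key : ε * σ2 ≤ (A + ε) ^ 2 * (4 / β) :=
    calc ε * σ2 ≤ ε * (2 * A / β) := by gcongr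
      _ = ε * A * (2 / β) := by ring
      _ ≤ 2 * (A + ε) ^ 2 * (2 / β) := mul_le_mul_of_nonneg_right hεA (by positivity)
      _ = (A + ε) ^ 2 * (4 / β) := by ring
  nlinarith

theorem middle_stage_concentration_general
    {Ω : Type*} [MeasurableSpace Ω] (μ : Measure Ω) [IsProbabilityMeasure μ]
    (W : Ω → ℝ) (hW : MemLp W 2 μ)
    (β ΔF A : ℝ) (hβ : 0 < β)
    (hmean : ∫ ω, W ω ∂μ = -ΔF - A)
    (hvar : variance W μ ≤ 2 * A / β)
    (ε : ℝ) (hε : 0 < ε) :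
    min (2 / 3) (ε / (4 / β + ε)) ≤ (μ {ω | W ω ≤ -ΔF + ε}).toReal := by
  have hA : 0 ≤ A := nonneg_of_le_two_mul_div hβ (variance_nonneg W μ) hvar
  have hevent : {ω | W ω ≤ -ΔF + ε} = {ω | W ω ≤ μ[W] + (A + ε)} := by
    rw [hmean]; ring_nf
  calc min (2 / 3) (ε / (4 / β + ε)) ≤ ε / (4 / β + ε) := min_le_right _ _
    _ ≤ (A + ε) ^ 2 / (Var[W; μ] + (A + ε) ^ 2) :=
        div_add_le_sq_div_add_sq hβ hA hε (variance_nonneg W μ) hvar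
    _ ≤ μ.real {ω | W ω ≤ μ[W] + (A + ε)} :=
        sq_div_variance_add_sq_le_measureReal_le hW (by positivity)
    _ = (μ {ω | W ω ≤ -ΔF + ε}).toReal := by rw [hevent]; rfl

theorem middle_stage_concentration
    {Ω : Type*} [MeasurableSpace Ω] (μ : Measure Ω) [IsProbabilityMeasure μ]
    (W : Ω → ℝ) (hW : MemLp W 2 μ)
    (β ΔF A : ℝ) (hβ : 0 < β) (hA : 0 ≤ A)
    (hmean : ∫ ω, W ω ∂μ = -ΔF - A)
    (hvar : variance W μ ≤ 2 * A / β)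
    (ε : ℝ) (hε : 0 < ε) :
    min (2 / 3) (ε / (4 / β + ε)) ≤ (μ {ω | W ω ≤ -ΔF + ε}).toReal :=
  middle_stage_concentration_general μ W hW β ΔF A hβ hmean hvar ε hε
end
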